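/- arXiv:2209.03595 — 2 statements merged into one kernel-verified Lean document; each statement's English description precedes it below -/
import Mathlib

section
/- Let n ≥ 1 and define f(x) = (1+|x|)^{-n} (ln(e+|x|))^{-1} on ℝ^n. Then f is not integrable on ℝ^n, but ∫_{ℝ^n} Ψ(x, M^loc f(x)) dx < ∞; in particular M^loc f belongs to L_log(ℝ^n). -/
open MeasureTheory Real Set Metric ENNReal

noncomputable section

/-- `ℝ^n` with the Euclidean norm. -/
abbrev En (n : ℕ) := EuclideanSpace ℝ (Fin n)

/-- `ln₊ t = max (ln t) 0`. -/
def lnp (t : ℝ) : ℝ := max (Real.log t) 0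

/-- The unit cube `Q = (-1/2, 1/2)^n`. -/
def unitQ (n : ℕ) : Set (En n) := {x | ∀ i, -(1/2 : ℝ) < x i ∧ x i < 1/2}

/-- The dilate `φ_t(y) = t^{-n} φ(y/t)` convolved with `f` at `x`:
`(φ_t ∗ f)(x) = ∫ t^{-n} φ((x-y)/t) f(y) dy`. -/
def phiConv (n : ℕ) (φ f : En n → ℝ) (t : ℝ) (x : En n) : ℝ :=
  ∫ y, (t ^ n)⁻¹ * φ (t⁻¹ • (x - y)) * f y

/-- The maximal function `𝓜_φ f(x) = sup_{t>0} |(φ_t ∗ f)(x)|`. -/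
def Mphi (n : ℕ) (φ f : En n → ℝ) (x : En n) : ℝ :=
  ⨆ t : {t : ℝ // 0 < t}, |phiConv n φ f t.1 x|

/-- A smooth function supported in the closed unit ball with integral `1`. -/
def IsTestFun (n : ℕ) (φ : En n → ℝ) : Prop :=
  ContDiff ℝ (⊤ : ℕ∞) φ ∧ (∀ x, x ∉ Metric.closedBall (0 : En n) 1 → φ x = 0) ∧ (∫ x, φ x) = 1

/-- Membership in the Hardy space `H^1(ℝ^n)`: the maximal function `𝓜_φ f` is
integrable for every admissible `φ`. -/
def MemH1 (n : ℕ) (f : En n → ℝ) : Prop :=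
  ∀ φ : En n → ℝ, IsTestFun n φ → Integrable (Mphi n φ f)

/-- The cube `Q_k = k + Q` for `k ∈ ℤ^n`. -/
def Qk (n : ℕ) (k : Fin n → ℤ) : Set (En n) :=
  {x | ∀ i, (k i : ℝ) - 1/2 < x i ∧ x i < (k i : ℝ) + 1/2}

/-- The lattice point `k ∈ ℤ^n` viewed as a point of `ℝ^n`. -/
def zv (n : ℕ) (k : Fin n → ℤ) : En n :=
  (EuclideanSpace.equiv (Fin n) ℝ).symm (fun i => (k i : ℝ))

/-- `μ_k = ‖f_k‖_{L^1} = ∫_{Q_k} |f|`. -/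
def muk (n : ℕ) (f : En n → ℝ) (k : Fin n → ℤ) : ℝ := ∫ x in Qk n k, |f x|

/-- The local Hardy–Littlewood maximal function
`M^loc f(x) = sup_{0<r<1} r^{-n} ∫_{|y-x|<r} |f(y)| dy`. -/
def Mloc (n : ℕ) (f : En n → ℝ) (x : En n) : ℝ :=
  ⨆ r : Set.Ioo (0 : ℝ) 1, ((r : ℝ) ^ n)⁻¹ * ∫ y in Metric.ball x (r : ℝ), |f y|

/-- The Musielak function `Ψ(x,t) = t / (ln(e+t) + ln(e+|x|))` defining `L_log`. -/
def Psi (n : ℕ) (x : En n) (t : ℝ) : ℝ :=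
  t / (Real.log (Real.exp 1 + t) + Real.log (Real.exp 1 + ‖x‖))

namespace Scratch

/-- the radial profile -/
def g (n : ℕ) (s : ℝ) : ℝ := ((1 + s) ^ n)⁻¹ * (Real.log (Real.exp 1 + s))⁻¹

lemma one_le_log {a : ℝ} (ha : 0 ≤ a) : 1 ≤ Real.log (Real.exp 1 + a) := by
  calc (1:ℝ) = Real.log (Real.exp 1) := (Real.log_exp 1).symm
  _ ≤ _ := Real.log_le_log (Real.exp_pos 1) (by linarith)

lemma g_nonneg {n : ℕ} {s : ℝ} (hs : 0 ≤ s) : 0 ≤ g n s := by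
  have h1 := one_le_log hs
  have : (0:ℝ) < (1+s)^n := by positivity
  unfold g; positivity

lemma g_anti {n : ℕ} {a b : ℝ} (ha : 0 ≤ a) (hab : a ≤ b) : g n b ≤ g n a := by
  have h1 := one_le_log ha
  have h1b : (1:ℝ) ≤ Real.log (Real.exp 1 + b) := one_le_log (ha.trans hab)
  have he := Real.exp_pos 1
  have hp : (0:ℝ) < (1+a)^n := pow_pos (by linarith) n
  have hpb : (0:ℝ) < (1+b)^n := pow_pos (by linarith) n
  unfold g
  apply mul_le_mul
  · exact inv_anti₀ hp (by gcongr <;> linarith)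
  · exact inv_anti₀ (by linarith) (Real.log_le_log (by linarith) (by linarith))
  · positivity
  · positivity

lemma g_le_one {n : ℕ} {s : ℝ} (hs : 0 ≤ s) : g n s ≤ 1 := by
  have h1 := one_le_log hs
  have h2 : (1:ℝ) ≤ (1+s)^n := one_le_pow₀ (by linarith)
  unfold g
  calc ((1 + s) ^ n)⁻¹ * (Real.log (Real.exp 1 + s))⁻¹ ≤ 1 * 1 := by
        apply mul_le_mul <;> first
          | exact inv_le_one_of_one_le₀ ‹_›
          | positivity
  _ = 1 := by ring

lemma cont_f (n : ℕ) : Continuous (fun y : En n => ((1 + ‖y‖) ^ n)⁻¹ * (Real.log (Real.exp 1 + ‖y‖))⁻¹) := by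
  have h1 : Continuous fun y : En n => (1 + ‖y‖) ^ n := by continuity
  have h2 : Continuous fun y : En n => Real.log (Real.exp 1 + ‖y‖) := by
    apply Continuous.log (by continuity)
    intro x
    have : (0:ℝ) < Real.exp 1 + ‖x‖ := by positivity
    linarith
  apply Continuous.mul
  · exact h1.inv₀ (fun x => by positivity)
  · exact h2.inv₀ (fun x => by
      have := one_le_log (norm_nonneg x); linarith)


variable {n : ℕ}

def fF (n : ℕ) : En n → ℝ := fun y => ((1 + ‖y‖) ^ n)⁻¹ * (Real.log (Real.exp 1 + ‖y‖))⁻¹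

lemma fF_eq_g (y : En n) : fF n y = g n ‖y‖ := rfl

def B (n : ℕ) : ℝ := (volume (Metric.ball (0 : En n) 1)).toReal

lemma B_nonneg : 0 ≤ B n := ENNReal.toReal_nonneg

lemma term_le (hn : 1 ≤ n) (x : En n) (r : Set.Ioo (0:ℝ) 1) :
    ((r : ℝ) ^ n)⁻¹ * ∫ y in Metric.ball x (r : ℝ), |fF n y| ≤ B n * g n (max (‖x‖ - 1) 0) := by
  haveI : Nonempty (Fin n) := Fin.pos_iff_nonempty.mp hn
  obtain ⟨r, hr0, hr1⟩ := r
  simp only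
  set m := max (‖x‖ - 1) 0 with hm
  have hm0 : 0 ≤ m := le_max_right _ _
  have hgm := g_nonneg (n := n) hm0
  -- pointwise bound on the ball
  have hptwise : ∀ y ∈ Metric.ball x r, |fF n y| ≤ g n m := by
    intro y hy
    rw [Metric.mem_ball, dist_comm] at hy
    have h1 : ‖x‖ - 1 ≤ ‖y‖ := by
      have := norm_sub_norm_le x y
      have : dist x y = ‖x - y‖ := rfl
      have hd : ‖x - y‖ < 1 := by rw [← this]; linarith
      have := norm_sub_norm_le x y
      linarith
    have h2 : m ≤ ‖y‖ := max_le h1 (norm_nonneg y)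
    rw [abs_of_nonneg (by rw [fF_eq_g]; exact g_nonneg (norm_nonneg y)), fF_eq_g]
    exact g_anti hm0 h2
  have hint : IntegrableOn (fun y => |fF n y|) (Metric.ball x r) volume := by
    have : Continuous fun y : En n => |fF n y| := (cont_f n).abs
    exact ((this.continuousOn).integrableOn_compact (isCompact_closedBall x r)).mono_set
      Metric.ball_subset_closedBall
  have hI : ∫ y in Metric.ball x r, |fF n y| ≤ g n m * (volume (Metric.ball x r)).toReal := by
    have h1 : ∫ y in Metric.ball x r, |fF n y| ≤ ∫ _ in Metric.ball x r, g n m :=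
      setIntegral_mono_on hint (integrableOn_const measure_ball_lt_top.ne)
        measurableSet_ball hptwise
    rw [setIntegral_const, smul_eq_mul] at h1
    rw [measureReal_def] at h1
    linarith
  have hvol : (volume (Metric.ball x r)).toReal = r ^ n * B n := by
    rw [Measure.addHaar_ball volume x hr0.le, ENNReal.toReal_mul, ENNReal.toReal_ofReal
      (by positivity)]
    congr 2
    exact finrank_euclideanSpace_fin
  have hrn : (0:ℝ) < r ^ n := by positivity
  calc ((r : ℝ) ^ n)⁻¹ * ∫ y in Metric.ball x r, |fF n y|
      ≤ (r ^ n)⁻¹ * (g n m * (r ^ n * B n)) := by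
        rw [hvol] at hI
        exact mul_le_mul_of_nonneg_left hI (by positivity)
    _ = B n * g n m := by field_simp

instance : Nonempty (Set.Ioo (0:ℝ) 1) := ⟨⟨1/2, by norm_num⟩⟩

lemma mloc_le (hn : 1 ≤ n) (x : En n) :
    Mloc n (fF n) x ≤ B n * g n (max (‖x‖ - 1) 0) :=
  ciSup_le (term_le hn x)

lemma mloc_nonneg (hn : 1 ≤ n) (x : En n) : 0 ≤ Mloc n (fF n) x := by
  have hbdd : BddAbove (Set.range fun r : Set.Ioo (0:ℝ) 1 =>
      ((r : ℝ) ^ n)⁻¹ * ∫ y in Metric.ball x (r : ℝ), |fF n y|) :=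
    ⟨_, Set.forall_mem_range.mpr (term_le hn x)⟩
  refine le_ciSup_of_le hbdd ⟨1/2, by norm_num⟩ ?_
  have : (0:ℝ) ≤ ∫ y in Metric.ball x (1/2 : ℝ), |fF n y| :=
    integral_nonneg fun y => abs_nonneg _
  positivity


/-- the dominating function -/
def hH (n : ℕ) (x : En n) : ℝ :=
  ((1 + ‖x‖) ^ n)⁻¹ * ((Real.log (Real.exp 1 + ‖x‖))⁻¹ * (Real.log (Real.exp 1 + ‖x‖))⁻¹)

lemma one_add_shift {s : ℝ} (hs : 0 ≤ s) : (1 + s) / 2 ≤ 1 + max (s - 1) 0 := by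
  rcases le_total s 1 with h | h
  · have : (0:ℝ) ≤ max (s-1) 0 := le_max_right _ _
    linarith
  · rw [max_eq_left (by linarith)]; linarith

lemma log_shift {s : ℝ} (hs : 0 ≤ s) :
    Real.log (Real.exp 1 + s) ≤ 2 * Real.log (Real.exp 1 + max (s - 1) 0) := by
  have he : (2.7182818283:ℝ) < Real.exp 1 := Real.exp_one_gt_d9
  rcases le_total s (Real.exp 1 + 1) with h | h
  · have h1 : Real.log (Real.exp 1 + s) ≤ 2 := by
      rw [Real.log_le_iff_le_exp (by positivity)]
      have : Real.exp 2 = Real.exp 1 * Real.exp 1 := by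
        rw [← Real.exp_add]; norm_num
      nlinarith
    have h2 : 1 ≤ Real.log (Real.exp 1 + max (s - 1) 0) := one_le_log (le_max_right _ _)
    linarith
  · rw [max_eq_left (by linarith)]
    have h4 : (4:ℝ) ≤ Real.exp 1 + s - 1 := by linarith
    have hsq : Real.exp 1 + s ≤ (Real.exp 1 + s - 1) ^ 2 := by nlinarith
    calc Real.log (Real.exp 1 + s) ≤ Real.log ((Real.exp 1 + s - 1) ^ 2) :=
          Real.log_le_log (by positivity) hsq
    _ = 2 * Real.log (Real.exp 1 + s - 1) := by
          rw [Real.log_pow]; norm_num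
    _ = 2 * Real.log (Real.exp 1 + (s - 1)) := by ring_nf

lemma psi_bound (hn : 1 ≤ n) (x : En n) :
    Psi n x (Mloc n (fF n) x) ≤ (B n * 2 ^ (n + 1)) * hH n x := by
  set m := max (‖x‖ - 1) 0 with hmdef
  have hm0 : (0:ℝ) ≤ m := le_max_right _ _
  set L := Real.log (Real.exp 1 + ‖x‖) with hLdef
  have hL : 1 ≤ L := one_le_log (norm_nonneg x)
  set t := Mloc n (fF n) x with htdef
  have ht0 : 0 ≤ t := mloc_nonneg hn x
  have ht : t ≤ B n * g n m := mloc_le hn x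
  have hlogm : 1 ≤ Real.log (Real.exp 1 + m) := one_le_log hm0
  have hgm : 0 ≤ g n m := g_nonneg hm0
  have hlogt : 0 ≤ Real.log (Real.exp 1 + t) := by
    have := one_le_log ht0; linarith
  have hx1 : (0:ℝ) < (1 + ‖x‖) ^ n := pow_pos (by have := norm_nonneg x; linarith) n
  have step1 : Psi n x t ≤ (B n * g n m) / L := by
    apply div_le_div₀ (mul_nonneg B_nonneg hgm) ht (by linarith) (by linarith)
  have hA : ((1 + m) ^ n)⁻¹ ≤ 2 ^ n * ((1 + ‖x‖) ^ n)⁻¹ := by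
    have h1 : (((1 + ‖x‖) / 2) ^ n)⁻¹ = 2 ^ n * ((1 + ‖x‖) ^ n)⁻¹ := by
      rw [div_pow, inv_div]
      ring
    rw [← h1]
    exact inv_anti₀ (pow_pos (by have := norm_nonneg x; linarith) n)
      (pow_le_pow_left₀ (by have := norm_nonneg x; linarith) (one_add_shift (norm_nonneg x)) n)
  have hB' : (Real.log (Real.exp 1 + m))⁻¹ ≤ 2 * L⁻¹ := by
    have h2 : L / 2 ≤ Real.log (Real.exp 1 + m) := by
      have := log_shift (norm_nonneg x); rw [← hmdef] at this; linarith
    have h3 : (Real.log (Real.exp 1 + m))⁻¹ ≤ (L / 2)⁻¹ :=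
      inv_anti₀ (by linarith) h2
    rw [inv_div, div_eq_mul_inv] at h3
    exact h3
  have step2 : g n m ≤ (2 ^ n * ((1 + ‖x‖) ^ n)⁻¹) * (2 * L⁻¹) := by
    unfold g
    exact mul_le_mul hA hB' (by positivity) (by positivity)
  have step3 : g n m * L⁻¹ ≤ (2 ^ n * ((1 + ‖x‖) ^ n)⁻¹) * (2 * L⁻¹) * L⁻¹ :=
    mul_le_mul_of_nonneg_right step2 (by positivity)
  have heq : (2 ^ n * ((1 + ‖x‖) ^ n)⁻¹) * (2 * L⁻¹) * L⁻¹ = 2 ^ (n + 1) * hH n x := by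
    unfold hH
    rw [pow_succ]
    ring
  calc Psi n x t ≤ (B n * g n m) / L := step1
  _ = B n * (g n m * L⁻¹) := by rw [div_eq_mul_inv]; ring
  _ ≤ B n * (2 ^ (n + 1) * hH n x) := by
      apply mul_le_mul_of_nonneg_left _ B_nonneg
      rw [← heq]; exact step3
  _ = (B n * 2 ^ (n + 1)) * hH n x := by ring


def S (n k : ℕ) : Set (En n) := Metric.ball 0 (2 ^ (k + 1)) \ Metric.ball 0 (2 ^ k)

lemma S_meas (n k : ℕ) : MeasurableSet (S n k) :=
  measurableSet_ball.diff measurableSet_ball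

lemma mem_S {n k : ℕ} {x : En n} (hx : x ∈ S n k) :
    (2:ℝ) ^ k ≤ ‖x‖ ∧ ‖x‖ < 2 ^ (k + 1) := by
  obtain ⟨h1, h2⟩ := hx
  rw [mem_ball_zero_iff] at h1
  change x ∉ Metric.ball 0 (2 ^ k) at h2
  constructor
  · by_contra h
    exact h2 (mem_ball_zero_iff.2 (by push_neg at h; linarith))
  · exact h1

lemma cover (n : ℕ) : (Set.univ : Set (En n)) ⊆ Metric.ball 0 1 ∪ ⋃ k, S n k := by
  intro x _
  by_cases hx : ‖x‖ < 1
  · exact Or.inl (mem_ball_zero_iff.2 hx)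
  · push_neg at hx
    right
    set mf := ⌊‖x‖⌋₊ with hmf
    have hm1 : 1 ≤ mf := Nat.le_floor (by exact_mod_cast hx)
    refine Set.mem_iUnion.2 ⟨Nat.log 2 mf, mem_ball_zero_iff.2 ?_, fun hlt => ?_⟩
    · have h1 : ‖x‖ < mf + 1 := Nat.lt_floor_add_one _
      have h2 : mf < 2 ^ (Nat.log 2 mf + 1) := Nat.lt_pow_succ_log_self (by norm_num) mf
      have h3 : (mf:ℝ) + 1 ≤ 2 ^ (Nat.log 2 mf + 1) := by
        have : (mf + 1 : ℕ) ≤ 2 ^ (Nat.log 2 mf + 1) := h2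
        exact_mod_cast this
      linarith
    · rw [mem_ball_zero_iff] at hlt
      have h4 : (2:ℕ) ^ Nat.log 2 mf ≤ mf := Nat.pow_log_le_self 2 (by omega)
      have h5 : ((2:ℝ)) ^ Nat.log 2 mf ≤ mf := by exact_mod_cast h4
      have h6 : (mf:ℝ) ≤ ‖x‖ := Nat.floor_le (norm_nonneg x)
      linarith

lemma hH_le_one (x : En n) : hH n x ≤ 1 := by
  have h1 : 1 ≤ Real.log (Real.exp 1 + ‖x‖) := one_le_log (norm_nonneg x)
  have h2 : (1:ℝ) ≤ (1 + ‖x‖) ^ n := one_le_pow₀ (by have := norm_nonneg x; linarith)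
  have h3 : ((1 + ‖x‖) ^ n)⁻¹ ≤ 1 := inv_le_one_of_one_le₀ h2
  have h4 : (Real.log (Real.exp 1 + ‖x‖))⁻¹ ≤ 1 := inv_le_one_of_one_le₀ h1
  have h5 : (0:ℝ) ≤ ((1 + ‖x‖) ^ n)⁻¹ := by positivity
  have h6 : (0:ℝ) ≤ (Real.log (Real.exp 1 + ‖x‖))⁻¹ := by
    have : (0:ℝ) < Real.log (Real.exp 1 + ‖x‖) := by linarith
    positivity
  calc hH n x ≤ 1 * (1 * 1) := by
        unfold hH
        apply mul_le_mul h3 (mul_le_mul h4 h4 h6 zero_le_one) (by positivity) zero_le_one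
  _ = 1 := by ring

lemma hH_nonneg (x : En n) : 0 ≤ hH n x := by
  have h1 : 1 ≤ Real.log (Real.exp 1 + ‖x‖) := one_le_log (norm_nonneg x)
  have h2 : (0:ℝ) < (1 + ‖x‖) ^ n := pow_pos (by have := norm_nonneg x; linarith) n
  unfold hH
  positivity

lemma lint_finite (hn : 1 ≤ n) (K : ℝ) (hK : 0 ≤ K) :
    ∫⁻ x : En n, ENNReal.ofReal (K * hH n x) < ⊤ := by
  haveI : Nonempty (Fin n) := Fin.pos_iff_nonempty.mp hn
  set μB := volume (Metric.ball (0 : En n) 1) with hμB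
  have hμB_top : μB ≠ ⊤ := measure_ball_lt_top.ne
  have hlog2 : (0:ℝ) < Real.log 2 := Real.log_pos (by norm_num)
  have hlog2le : Real.log 2 ≤ 1 := by
    have h := Real.log_lt_log two_pos (by nlinarith [Real.exp_one_gt_d9] : (2:ℝ) < Real.exp 1)
    rw [Real.log_exp] at h
    linarith
  set c := K * 2 ^ n * (2 / Real.log 2) ^ 2 with hc
  -- bound on each annulus
  have annulus : ∀ k : ℕ, ∫⁻ x in S n k, ENNReal.ofReal (K * hH n x)
      ≤ ENNReal.ofReal (c / (k + 1) ^ 2) * μB := by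
    intro k
    set b : ℝ := (2 ^ (k * n))⁻¹ * ((2 / ((k + 1) * Real.log 2)) * (2 / ((k + 1) * Real.log 2)))
      with hb
    have hptw : ∀ x ∈ S n k, ENNReal.ofReal (K * hH n x) ≤ ENNReal.ofReal (K * b) := by
      intro x hx
      obtain ⟨hx1, hx2⟩ := mem_S hx
      apply ENNReal.ofReal_le_ofReal
      apply mul_le_mul_of_nonneg_left _ hK
      have hden : (2:ℝ) ^ (k * n) ≤ (1 + ‖x‖) ^ n := by
        calc (2:ℝ) ^ (k * n) = (2 ^ k) ^ n := by rw [pow_mul]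
        _ ≤ (1 + ‖x‖) ^ n := pow_le_pow_left₀ (by positivity) (by linarith) n
      have hinv1 : ((1 + ‖x‖) ^ n)⁻¹ ≤ (2 ^ (k * n) : ℝ)⁻¹ :=
        inv_anti₀ (by positivity) hden
      have hlogL : ((k:ℝ) + 1) * Real.log 2 / 2 ≤ Real.log (Real.exp 1 + ‖x‖) := by
        have e1 : 1 ≤ Real.log (Real.exp 1 + ‖x‖) := one_le_log (norm_nonneg x)
        have e2 : (k:ℝ) * Real.log 2 ≤ Real.log (Real.exp 1 + ‖x‖) := by
          have : Real.log ((2:ℝ) ^ k) ≤ Real.log (Real.exp 1 + ‖x‖) := by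
            apply Real.log_le_log (by positivity)
            have := (Real.exp_pos 1).le
            linarith
          rwa [Real.log_pow] at this
        nlinarith
      have hL0 : (0:ℝ) < ((k:ℝ) + 1) * Real.log 2 / 2 := by positivity
      have hinv2 : (Real.log (Real.exp 1 + ‖x‖))⁻¹ ≤ 2 / (((k:ℝ) + 1) * Real.log 2) := by
        have := inv_anti₀ hL0 hlogL
        rwa [inv_div] at this
      have h6 : (0:ℝ) ≤ (Real.log (Real.exp 1 + ‖x‖))⁻¹ := by
        have := one_le_log (norm_nonneg x); positivity
      unfold hH
      rw [hb]
      push_cast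
      apply mul_le_mul hinv1 (mul_le_mul hinv2 hinv2 h6 (by positivity)) (by positivity)
        (by positivity)
    calc ∫⁻ x in S n k, ENNReal.ofReal (K * hH n x)
        ≤ ∫⁻ _ in S n k, ENNReal.ofReal (K * b) := setLIntegral_mono' (S_meas n k) hptw
      _ = ENNReal.ofReal (K * b) * volume (S n k) := setLIntegral_const _ _
      _ ≤ ENNReal.ofReal (K * b) * (ENNReal.ofReal ((2:ℝ) ^ ((k + 1) * n)) * μB) := by
          apply mul_le_mul_right
          have hvol : volume (S n k) ≤ volume (Metric.ball (0 : En n) (2 ^ (k + 1))) :=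
            measure_mono Set.diff_subset
          rwa [Measure.addHaar_ball volume _ (by positivity : (0:ℝ) ≤ 2 ^ (k+1)),
            finrank_euclideanSpace_fin, ← pow_mul] at hvol
      _ = ENNReal.ofReal (K * b * 2 ^ ((k + 1) * n)) * μB := by
          rw [← mul_assoc, ← ENNReal.ofReal_mul (by positivity)]
      _ = ENNReal.ofReal (c / (k + 1) ^ 2) * μB := by
          congr 1
          rw [hb, hc, show (k + 1) * n = k * n + n by ring, pow_add]
          have h2n : ((2:ℝ) ^ (k * n)) ≠ 0 := by positivity
          have hk1 : ((k:ℝ) + 1) ≠ 0 := by positivity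
          field_simp
  -- the ball piece
  have ballpiece : ∫⁻ x in Metric.ball (0 : En n) 1, ENNReal.ofReal (K * hH n x)
      ≤ ENNReal.ofReal K * μB := by
    calc ∫⁻ x in Metric.ball (0 : En n) 1, ENNReal.ofReal (K * hH n x)
        ≤ ∫⁻ _ in Metric.ball (0 : En n) 1, ENNReal.ofReal K :=
          setLIntegral_mono' measurableSet_ball (fun x _ => ENNReal.ofReal_le_ofReal
            (by nlinarith [hH_le_one (n := n) x, hH_nonneg (n := n) x]))
      _ = ENNReal.ofReal K * μB := setLIntegral_const _ _
  -- summability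
  have hsum : ∑' k : ℕ, ENNReal.ofReal (c / (k + 1) ^ 2) < ⊤ := by
    have hsummable : Summable fun k : ℕ => c / ((k:ℝ) + 1) ^ 2 := by
      have h1 : Summable fun k : ℕ => 1 / ((k:ℝ)) ^ 2 :=
        summable_one_div_nat_pow.2 one_lt_two
      have h2 : Summable fun k : ℕ => 1 / ((k:ℝ) + 1) ^ 2 := by
        have := (summable_nat_add_iff 1).2 h1
        apply this.congr
        intro k
        push_cast
        ring_nf
      have := h2.mul_left c
      apply this.congr
      intro k
      rw [mul_one_div]
    rw [← ENNReal.ofReal_tsum_of_nonneg (fun k => by positivity) hsummable]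
    exact ENNReal.ofReal_lt_top
  calc ∫⁻ x : En n, ENNReal.ofReal (K * hH n x)
      = ∫⁻ x in Set.univ, ENNReal.ofReal (K * hH n x) := (setLIntegral_univ _).symm
    _ ≤ ∫⁻ x in Metric.ball 0 1 ∪ ⋃ k, S n k, ENNReal.ofReal (K * hH n x) :=
        lintegral_mono_set (cover n)
    _ ≤ (∫⁻ x in Metric.ball (0 : En n) 1, ENNReal.ofReal (K * hH n x))
        + ∫⁻ x in ⋃ k, S n k, ENNReal.ofReal (K * hH n x) := lintegral_union_le _ _ _
    _ ≤ ENNReal.ofReal K * μB + ∑' k : ℕ, ENNReal.ofReal (c / (k + 1) ^ 2) * μB := by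
        apply add_le_add ballpiece
        calc ∫⁻ x in ⋃ k, S n k, ENNReal.ofReal (K * hH n x)
            ≤ ∑' k : ℕ, ∫⁻ x in S n k, ENNReal.ofReal (K * hH n x) :=
              lintegral_iUnion_le _ _
          _ ≤ _ := ENNReal.tsum_le_tsum annulus
    _ < ⊤ := by
        rw [ENNReal.tsum_mul_right]
        apply ENNReal.add_lt_top.2
        constructor
        · exact ENNReal.mul_lt_top ENNReal.ofReal_lt_top hμB_top.lt_top
        · exact ENNReal.mul_lt_top hsum hμB_top.lt_top


lemma hlog2le' : Real.log 2 ≤ 1 := by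
  have h := Real.log_lt_log two_pos (by nlinarith [Real.exp_one_gt_d9] : (2:ℝ) < Real.exp 1)
  rw [Real.log_exp] at h
  linarith

lemma fF_lower (k : ℕ) (x : En n) (hx : x ∈ S n k) :
    ((2:ℝ) ^ ((k + 2) * n))⁻¹ * (((k:ℝ) + 2))⁻¹ ≤ fF n x := by
  obtain ⟨hx1, hx2⟩ := mem_S hx
  have he : (2.7182818283:ℝ) < Real.exp 1 := Real.exp_one_gt_d9
  have hx0 : (0:ℝ) ≤ ‖x‖ := norm_nonneg x
  have h2k1 : (1:ℝ) ≤ 2 ^ (k + 1) := one_le_pow₀ one_le_two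
  have h1 : (1 + ‖x‖) ≤ 2 ^ (k + 2) := by
    have : (2:ℝ) ^ (k + 2) = 2 ^ (k + 1) + 2 ^ (k + 1) := by ring
    linarith
  have hpow : (1 + ‖x‖) ^ n ≤ 2 ^ ((k + 2) * n) := by
    rw [pow_mul]
    exact pow_le_pow_left₀ (by linarith) h1 n
  have hlog : Real.log (Real.exp 1 + ‖x‖) ≤ (k:ℝ) + 2 := by
    have h2 : (2:ℝ) ≤ 2 ^ (k + 1) := by
      calc (2:ℝ) = 2 ^ 1 := (pow_one 2).symm
      _ ≤ 2 ^ (k + 1) := pow_le_pow_right₀ one_le_two (by omega)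
    have harg : Real.exp 1 + ‖x‖ ≤ Real.exp 1 * 2 ^ (k + 1) := by nlinarith
    calc Real.log (Real.exp 1 + ‖x‖) ≤ Real.log (Real.exp 1 * 2 ^ (k + 1)) :=
        Real.log_le_log (by positivity) harg
    _ = 1 + ((k:ℝ) + 1) * Real.log 2 := by
        rw [Real.log_mul (Real.exp_ne_zero 1) (by positivity), Real.log_exp, Real.log_pow]
        push_cast; ring
    _ ≤ (k:ℝ) + 2 := by nlinarith [hlog2le', Real.log_pos (one_lt_two (α := ℝ))]
  have hlogpos : (0:ℝ) < Real.log (Real.exp 1 + ‖x‖) := by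
    have := one_le_log hx0; linarith
  have hA : ((1 + ‖x‖) ^ n)⁻¹ ≥ ((2:ℝ) ^ ((k + 2) * n))⁻¹ := inv_anti₀ (by positivity) hpow
  have hB : (Real.log (Real.exp 1 + ‖x‖))⁻¹ ≥ (((k:ℝ) + 2))⁻¹ := inv_anti₀ hlogpos hlog
  have := mul_le_mul hA hB (by positivity) (by positivity)
  exact this

lemma S_disj (n : ℕ) : Pairwise (Function.onFun Disjoint (S n)) := by
  intro k l hkl
  rw [Function.onFun, Set.disjoint_left]
  intro x hk hl
  obtain ⟨hk1, hk2⟩ := mem_S hk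
  obtain ⟨hl1, hl2⟩ := mem_S hl
  have h1 : (2:ℝ) ^ k < 2 ^ (l + 1) := lt_of_le_of_lt hk1 hl2
  have h2 : (2:ℝ) ^ l < 2 ^ (k + 1) := lt_of_le_of_lt hl1 hk2
  rw [pow_lt_pow_iff_right₀ (one_lt_two : (1:ℝ) < 2)] at h1 h2
  omega

lemma S_vol (hn : 1 ≤ n) (k : ℕ) :
    ENNReal.ofReal ((2:ℝ) ^ (k * n)) * volume (Metric.ball (0 : En n) 1) ≤ volume (S n k) := by
  haveI : Nonempty (Fin n) := Fin.pos_iff_nonempty.mp hn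
  have hsub : Metric.ball (0 : En n) (2 ^ k) ⊆ Metric.ball 0 (2 ^ (k + 1)) :=
    Metric.ball_subset_ball (by
      have : (2:ℝ) ^ k ≤ 2 ^ (k + 1) := pow_le_pow_right₀ one_le_two (by omega)
      linarith)
  rw [S, measure_diff hsub measurableSet_ball.nullMeasurableSet measure_ball_lt_top.ne,
    Measure.addHaar_ball volume _ (by positivity : (0:ℝ) ≤ 2 ^ (k + 1)),
    Measure.addHaar_ball volume _ (by positivity : (0:ℝ) ≤ 2 ^ k),
    finrank_euclideanSpace_fin, ← pow_mul, ← pow_mul]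
  apply ENNReal.le_sub_of_add_le_right (ENNReal.mul_ne_top ENNReal.ofReal_ne_top measure_ball_lt_top.ne)
  rw [← add_mul, ← ENNReal.ofReal_add (by positivity) (by positivity)]
  apply mul_le_mul_left
  apply ENNReal.ofReal_le_ofReal
  have : (2:ℝ) ^ (k * n) + 2 ^ (k * n) = 2 ^ (k * n + 1) := by ring
  rw [this]
  exact pow_le_pow_right₀ one_le_two (by nlinarith)

lemma lint_infinite (hn : 1 ≤ n) : ∫⁻ x : En n, ENNReal.ofReal (fF n x) = ⊤ := by
  haveI : Nonempty (Fin n) := Fin.pos_iff_nonempty.mp hn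
  set μB := volume (Metric.ball (0 : En n) 1) with hμB
  have hμB0 : μB ≠ 0 := (Metric.measure_ball_pos volume 0 one_pos).ne'
  set c : ℝ := ((2:ℝ) ^ (2 * n))⁻¹ with hc
  have hc0 : 0 < c := by positivity
  have hterm : ∀ k : ℕ, ENNReal.ofReal (c / ((k:ℝ) + 2)) * μB
      ≤ ∫⁻ x in S n k, ENNReal.ofReal (fF n x) := by
    intro k
    set b : ℝ := ((2:ℝ) ^ ((k + 2) * n))⁻¹ * (((k:ℝ) + 2))⁻¹ with hb
    have hbc : ENNReal.ofReal (c / ((k:ℝ) + 2)) * μB ≤ ENNReal.ofReal b * volume (S n k) := by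
      calc ENNReal.ofReal (c / ((k:ℝ) + 2)) * μB
          = ENNReal.ofReal (b * 2 ^ (k * n)) * μB := by
            congr 1
            rw [hb, hc, show (k + 2) * n = k * n + 2 * n by ring, pow_add]
            have h1 : ((2:ℝ) ^ (k * n)) ≠ 0 := by positivity
            have h2 : ((2:ℝ) ^ (2 * n)) ≠ 0 := by positivity
            have h3 : ((k:ℝ) + 2) ≠ 0 := by positivity
            field_simp
          _ = ENNReal.ofReal b * (ENNReal.ofReal ((2:ℝ) ^ (k * n)) * μB) := by
            rw [← mul_assoc, ← ENNReal.ofReal_mul (by positivity)]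
          _ ≤ ENNReal.ofReal b * volume (S n k) := mul_le_mul_right (S_vol hn k) _
    refine hbc.trans ?_
    rw [← setLIntegral_const (S n k) (ENNReal.ofReal b)]
    exact setLIntegral_mono' (S_meas n k) fun x hx =>
      ENNReal.ofReal_le_ofReal (fF_lower k x hx)
  have htsum : ∑' k : ℕ, ENNReal.ofReal (c / ((k:ℝ) + 2)) = ⊤ := by
    by_contra ht
    have hsummable := ENNReal.summable_toReal ht
    have h1 : Summable fun k : ℕ => c / ((k:ℝ) + 2) := by
      apply hsummable.congr
      intro k
      rw [ENNReal.toReal_ofReal (by positivity)]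
    have h2 : Summable fun k : ℕ => 1 / ((k:ℝ) + 2) := by
      have := h1.mul_left c⁻¹
      apply this.congr
      intro k
      field_simp
    have h3 : Summable fun k : ℕ => 1 / ((k + 2 : ℕ) : ℝ) := by
      apply h2.congr
      intro k
      push_cast
      ring_nf
    exact Real.not_summable_one_div_natCast ((summable_nat_add_iff 2).1 h3)
  have hbig : (⊤ : ℝ≥0∞) ≤ ∫⁻ x : En n, ENNReal.ofReal (fF n x) := by
    calc (⊤ : ℝ≥0∞) = (∑' k : ℕ, ENNReal.ofReal (c / ((k:ℝ) + 2))) * μB := by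
          rw [htsum, ENNReal.top_mul hμB0]
      _ = ∑' k : ℕ, ENNReal.ofReal (c / ((k:ℝ) + 2)) * μB := ENNReal.tsum_mul_right.symm
      _ ≤ ∑' k : ℕ, ∫⁻ x in S n k, ENNReal.ofReal (fF n x) := ENNReal.tsum_le_tsum hterm
      _ = ∫⁻ x in ⋃ k, S n k, ENNReal.ofReal (fF n x) :=
          (lintegral_iUnion (S_meas n) (S_disj n) _).symm
      _ ≤ ∫⁻ x : En n, ENNReal.ofReal (fF n x) := setLIntegral_le_lintegral _ _
  exact top_le_iff.mp hbig

end Scratch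

open Scratch in
/-- **Example.** The function `f(x) = (1+|x|)^{-n} (ln(e+|x|))^{-1}` is not
integrable on `ℝ^n`, yet `∫ Ψ(x, M^loc f(x)) dx < ∞`, i.e. `M^loc f ∈ L_log`. -/
theorem example_not_integrable_in_llog (n : ℕ) (hn : 1 ≤ n) :
    ¬ Integrable (fun x : En n =>
        ((1 + ‖x‖) ^ n)⁻¹ * (Real.log (Real.exp 1 + ‖x‖))⁻¹) ∧
    ∫⁻ x, ENNReal.ofReal (Psi n x (Mloc n
        (fun y : En n => ((1 + ‖y‖) ^ n)⁻¹ * (Real.log (Real.exp 1 + ‖y‖))⁻¹) x)) < ⊤ := by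
  have hfF : (fun y : En n => ((1 + ‖y‖) ^ n)⁻¹ * (Real.log (Real.exp 1 + ‖y‖))⁻¹) = fF n := rfl
  constructor
  · intro hInt
    rw [hfF] at hInt
    have h1 := hInt.lintegral_lt_top
    rw [lint_infinite hn] at h1
    exact absurd h1 (lt_irrefl ⊤)
  · rw [hfF]
    calc ∫⁻ x, ENNReal.ofReal (Psi n x (Mloc n (fF n) x))
        ≤ ∫⁻ x, ENNReal.ofReal ((B n * 2 ^ (n + 1)) * hH n x) :=
          lintegral_mono fun x => ENNReal.ofReal_le_ofReal (psi_bound hn x)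
      _ < ⊤ := lint_finite hn _ (mul_nonneg B_nonneg (by positivity))
end
end

section
/- Let n ≥ 1, let f be an integrable function on ℝ^n, and let φ be a smooth function supported in the closed unit ball with ∫φ = 1. If the maximal function 𝓜_φ f belongs to L_log(ℝ^n), i.e. ∫_{ℝ^n} Ψ(x, 𝓜_φ f(x)) dx < ∞, then ∫_{ℝ^n} f dx = 0. -/
open MeasureTheory Real Set Metric ENNReal

noncomputable section

section Aux

open Filter Topology

variable {n : ℕ} {φ f : En n → ℝ}

private lemma one_le_log_exp_add {s : ℝ} (hs : 0 ≤ s) : 1 ≤ Real.log (Real.exp 1 + s) := by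
  calc (1:ℝ) = Real.log (Real.exp 1) := by rw [Real.log_exp]
  _ ≤ _ := Real.log_le_log (Real.exp_pos 1) (by linarith)

private lemma psi_mono (n : ℕ) (x : En n) {a b : ℝ} (ha : 0 ≤ a) (hab : a ≤ b) :
    Psi n x a ≤ Psi n x b := by
  have hb : 0 ≤ b := ha.trans hab
  have hB : 1 ≤ Real.log (Real.exp 1 + ‖x‖) := one_le_log_exp_add (norm_nonneg x)
  have hla : 1 ≤ Real.log (Real.exp 1 + a) := one_le_log_exp_add ha
  have hlb : 1 ≤ Real.log (Real.exp 1 + b) := one_le_log_exp_add hb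
  have hea : 0 < Real.exp 1 + a := by positivity
  have heb : 0 < Real.exp 1 + b := by positivity
  rw [Psi, Psi, div_le_div_iff₀ (by linarith) (by linarith)]
  have key : Real.log (Real.exp 1 + b) - Real.log (Real.exp 1 + a)
      ≤ (b - a) / (Real.exp 1 + a) := by
    rw [← Real.log_div heb.ne' hea.ne']
    have := Real.log_le_sub_one_of_pos (div_pos heb hea)
    calc Real.log ((Real.exp 1 + b) / (Real.exp 1 + a))
        ≤ (Real.exp 1 + b) / (Real.exp 1 + a) - 1 := this
    _ = (b - a) / (Real.exp 1 + a) := by field_simp; ring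
  have h1 : a * (Real.log (Real.exp 1 + b) - Real.log (Real.exp 1 + a)) ≤ b - a := by
    calc a * (Real.log (Real.exp 1 + b) - Real.log (Real.exp 1 + a))
        ≤ a * ((b - a) / (Real.exp 1 + a)) := by
          apply mul_le_mul_of_nonneg_left key ha
    _ ≤ 1 * (b - a) := by
          rw [mul_div_assoc'] ; rw [div_le_iff₀ hea]
          nlinarith [Real.exp_pos 1]
    _ = b - a := one_mul _
  nlinarith [mul_le_mul_of_nonneg_left hB (sub_nonneg.2 hab),
    mul_nonneg (sub_nonneg.2 hab) (by linarith : (0:ℝ) ≤ Real.log (Real.exp 1 + a))]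

private lemma integrand_integrable (hf : Integrable f) (hφc : Continuous φ)
    {Cφ : ℝ} (hCφ : ∀ x, |φ x| ≤ Cφ) (t : ℝ) (x : En n) :
    Integrable (fun y => (t ^ n)⁻¹ * φ (t⁻¹ • (x - y)) * f y) := by
  apply hf.bdd_mul (c := |(t ^ n)⁻¹| * Cφ)
  · exact (continuous_const.mul
      (hφc.comp ((continuous_const.sub continuous_id).const_smul t⁻¹))).aestronglyMeasurable
  · refine Filter.Eventually.of_forall fun y => ?_
    rw [Real.norm_eq_abs, abs_mul]
    exact mul_le_mul_of_nonneg_left (hCφ _) (abs_nonneg _)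

private lemma phiConv_abs_le (hf : Integrable f) (hφc : Continuous φ)
    (hφsupp : ∀ x, x ∉ Metric.closedBall (0 : En n) 1 → φ x = 0)
    {Cφ : ℝ} (hCφ : ∀ x, |φ x| ≤ Cφ) {t : ℝ} (ht : 0 < t) (x : En n) :
    |phiConv n φ f t x| ≤ (t ^ n)⁻¹ * Cφ * ∫ y in closedBall x t, |f y| := by
  have hi := integrand_integrable hf hφc hCφ t x
  have hCφ0 : (0:ℝ) ≤ Cφ := le_trans (abs_nonneg _) (hCφ 0)
  have htn : (0:ℝ) < (t ^ n)⁻¹ := by positivity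
  calc |phiConv n φ f t x| ≤ ∫ y, |(t ^ n)⁻¹ * φ (t⁻¹ • (x - y)) * f y| := by
        simpa only [Real.norm_eq_abs, phiConv] using norm_integral_le_integral_norm
          (fun y => (t ^ n)⁻¹ * φ (t⁻¹ • (x - y)) * f y)
  _ ≤ ∫ y, (closedBall x t).indicator (fun y => (t ^ n)⁻¹ * Cφ * |f y|) y := by
        apply integral_mono hi.abs ((hf.abs.const_mul _).indicator measurableSet_closedBall)
        intro y
        by_cases hy : y ∈ closedBall x t
        · simp only [indicator_of_mem hy]
          rw [abs_mul, abs_mul, abs_of_pos htn]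
          exact mul_le_mul_of_nonneg_right (mul_le_mul_of_nonneg_left (hCφ _) htn.le) (abs_nonneg _)
        · simp only [indicator_of_notMem hy]
          have : φ (t⁻¹ • (x - y)) = 0 := by
            apply hφsupp
            simp only [mem_closedBall, dist_zero_right, not_le, norm_smul, Real.norm_eq_abs,
              abs_of_pos (inv_pos.2 ht)]
            rw [mem_closedBall, dist_comm] at hy
            push_neg at hy
            rw [dist_eq_norm] at hy
            calc (1:ℝ) = t⁻¹ * t := by field_simp
            _ < t⁻¹ * ‖x - y‖ := by exact mul_lt_mul_of_pos_left hy (inv_pos.2 ht)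
          simp [this]
  _ = (t ^ n)⁻¹ * Cφ * ∫ y in closedBall x t, |f y| := by
        rw [integral_indicator measurableSet_closedBall, integral_const_mul]

private lemma vol_closedBall_En (n : ℕ) (x : En n) {t : ℝ} (ht : 0 ≤ t) :
    (volume (closedBall x t)).toReal = t ^ n * (volume (ball (0 : En n) 1)).toReal := by
  rw [Measure.addHaar_closedBall volume x ht, finrank_euclideanSpace_fin,
    ENNReal.toReal_mul, ENNReal.toReal_ofReal (by positivity)]

private lemma ae_bddAbove (hf : Integrable f) (hφc : Continuous φ)
    (hφsupp : ∀ x, x ∉ Metric.closedBall (0 : En n) 1 → φ x = 0)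
    {Cφ : ℝ} (hCφ : ∀ x, |φ x| ≤ Cφ) :
    ∀ᵐ x, BddAbove (Set.range fun t : {t : ℝ // 0 < t} => |phiConv n φ f t.1 x|) := by
  have hCφ0 : (0:ℝ) ≤ Cφ := le_trans (abs_nonneg _) (hCφ 0)
  filter_upwards [IsUnifLocDoublingMeasure.ae_tendsto_average (μ := (volume : Measure (En n)))
    (hf.abs.locallyIntegrable) 1] with x hx
  have hT : Tendsto (fun r : ℝ => ⨍ y in closedBall x r, |f y|) (𝓝[>] 0) (𝓝 |f x|) := by
    apply hx (fun _ => x) id tendsto_id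
    filter_upwards [self_mem_nhdsWithin] with r hr
    have hr' : (0:ℝ) < r := hr
    exact mem_closedBall_self (by simp only [one_mul, id_eq]; linarith)
  have hev : ∀ᶠ r in 𝓝[>] (0:ℝ), (⨍ y in closedBall x r, |f y|) < |f x| + 1 :=
    hT.eventually_lt_const (by linarith [abs_nonneg (f x)])
  obtain ⟨δ, hδmem, hδ⟩ := mem_nhdsGT_iff_exists_Ioo_subset.1 hev
  have hδ0 : 0 < δ := hδmem
  set Vc := (volume (ball (0 : En n) 1)).toReal with hVc
  refine ⟨max (Cφ * (Vc * (|f x| + 1))) ((δ ^ n)⁻¹ * Cφ * ∫ y, |f y|), ?_⟩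
  rintro - ⟨⟨t, ht⟩, rfl⟩
  simp only
  have hball : ∫ y in closedBall x t, |f y| =
      (t ^ n * Vc) * ⨍ y in closedBall x t, |f y| := by
    rw [← measure_smul_setAverage _ (measure_closedBall_lt_top).ne,
      smul_eq_mul, measureReal_def, vol_closedBall_En n x ht.le]
  have havg0 : 0 ≤ ⨍ y in closedBall x t, |f y| := by
    rw [setAverage_eq, smul_eq_mul]
    exact mul_nonneg (by positivity)
      (setIntegral_nonneg measurableSet_closedBall fun y _ => abs_nonneg _)
  have hVc0 : 0 ≤ Vc := ENNReal.toReal_nonneg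
  have htn : (0:ℝ) < t ^ n := by positivity
  rcases lt_or_ge t δ with hcase | hcase
  · refine le_trans (phiConv_abs_le hf hφc hφsupp hCφ ht x) (le_max_of_le_left ?_)
    rw [hball]
    have havg : (⨍ y in closedBall x t, |f y|) ≤ |f x| + 1 := (hδ ⟨ht, hcase⟩).le
    calc (t ^ n)⁻¹ * Cφ * (t ^ n * Vc * ⨍ y in closedBall x t, |f y|)
        = Cφ * (Vc * ⨍ y in closedBall x t, |f y|) := by field_simp
    _ ≤ Cφ * (Vc * (|f x| + 1)) := by gcongr
  · refine le_trans (phiConv_abs_le hf hφc hφsupp hCφ ht x) (le_max_of_le_right ?_)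
    have h1 : (t ^ n)⁻¹ ≤ (δ ^ n)⁻¹ := by
      apply inv_anti₀ (by positivity) (pow_le_pow_left₀ hδ0.le hcase n)
    have h2 : (∫ y in closedBall x t, |f y|) ≤ ∫ y, |f y| :=
      setIntegral_le_integral hf.abs (Eventually.of_forall fun y => abs_nonneg _)
    have h3 : 0 ≤ ∫ y in closedBall x t, |f y| :=
      setIntegral_nonneg measurableSet_closedBall fun y _ => abs_nonneg _
    gcongr

private lemma key_estimate (hf : Integrable f) (hφc : Continuous φ)
    {Cφ η τ ρ R : ℝ} {z : En n} (hCφ : ∀ x, |φ x| ≤ Cφ) (hη : 0 ≤ η)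
    (hρ : ∀ w : En n, ‖w - z‖ ≤ ρ → |φ w - φ z| ≤ η)
    (hτ : ∫ y in (closedBall (0 : En n) R)ᶜ, |f y| ≤ τ)
    {t : ℝ} (ht : 0 < t) {x : En n}
    (hgeom : ∀ y ∈ closedBall (0 : En n) R, ‖t⁻¹ • (x - y) - z‖ ≤ ρ) :
    (t ^ n)⁻¹ * (|φ z| * |∫ y, f y| - (η * ∫ y, |f y|) - 2 * Cφ * τ)
      ≤ |phiConv n φ f t x| := by
  have hCφ0 : (0:ℝ) ≤ Cφ := le_trans (abs_nonneg _) (hCφ 0)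
  have htn : (0:ℝ) < (t ^ n)⁻¹ := by positivity
  set g : En n → ℝ := fun y => (t ^ n)⁻¹ * φ (t⁻¹ • (x - y)) * f y with hg
  set g0 : En n → ℝ := fun y => ((t ^ n)⁻¹ * φ z) * f y with hg0
  have hgi : Integrable g := integrand_integrable hf hφc hCφ t x
  have hg0i : Integrable g0 := hf.const_mul _
  have hg0int : ∫ y, g0 y = (t ^ n)⁻¹ * φ z * ∫ y, f y := integral_const_mul _ _
  set h : En n → ℝ := fun y => (t ^ n)⁻¹ *
      ((closedBall (0 : En n) R).indicator (fun y => η * |f y|) y +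
       ((closedBall (0 : En n) R)ᶜ).indicator (fun y => (2 * Cφ) * |f y|) y) with hh
  have hhi : Integrable h := by
    apply Integrable.const_mul
    exact ((hf.abs.const_mul η).indicator measurableSet_closedBall).add
      ((hf.abs.const_mul _).indicator measurableSet_closedBall.compl)
  have hptwise : ∀ y, |g y - g0 y| ≤ h y := by
    intro y
    have heq : g y - g0 y = (t ^ n)⁻¹ * ((φ (t⁻¹ • (x - y)) - φ z) * f y) := by
      simp only [hg, hg0]; ring
    rw [heq, abs_mul, abs_of_pos htn, abs_mul]
    by_cases hy : y ∈ closedBall (0 : En n) R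
    · have h1 : |φ (t⁻¹ • (x - y)) - φ z| ≤ η := hρ _ (hgeom y hy)
      have h2 : y ∉ (closedBall (0 : En n) R)ᶜ := not_not_intro hy
      simp only [hh, indicator_of_mem hy, indicator_of_notMem h2, add_zero]
      exact mul_le_mul_of_nonneg_left (mul_le_mul_of_nonneg_right h1 (abs_nonneg _)) htn.le
    · have h1 : |φ (t⁻¹ • (x - y)) - φ z| ≤ 2 * Cφ := by
        calc |φ (t⁻¹ • (x - y)) - φ z| ≤ |φ (t⁻¹ • (x - y))| + |φ z| := abs_sub _ _
        _ ≤ Cφ + Cφ := add_le_add (hCφ _) (hCφ _)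
        _ = 2 * Cφ := by ring
      have h2 : y ∈ (closedBall (0 : En n) R)ᶜ := hy
      simp only [hh, indicator_of_notMem hy, indicator_of_mem h2, zero_add]
      exact mul_le_mul_of_nonneg_left (mul_le_mul_of_nonneg_right h1 (abs_nonneg _)) htn.le
  have hinth : ∫ y, h y ≤ (t ^ n)⁻¹ * ((η * ∫ y, |f y|) + 2 * Cφ * τ) := by
    have e1 : ∫ y, h y = (t ^ n)⁻¹ * ((η * ∫ y in closedBall (0 : En n) R, |f y|)
        + 2 * Cφ * ∫ y in (closedBall (0 : En n) R)ᶜ, |f y|) := by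
      rw [hh]
      rw [integral_const_mul]
      rw [integral_add (((hf.abs.const_mul η).indicator measurableSet_closedBall))
        ((hf.abs.const_mul _).indicator measurableSet_closedBall.compl),
        integral_indicator measurableSet_closedBall,
        integral_indicator measurableSet_closedBall.compl,
        integral_const_mul, integral_const_mul]
    rw [e1]
    have h2 : (∫ y in closedBall (0 : En n) R, |f y|) ≤ ∫ y, |f y| :=
      setIntegral_le_integral hf.abs (Eventually.of_forall fun y => abs_nonneg _)
    gcongr
  have herr : |(∫ y, g y) - ∫ y, g0 y| ≤ (t ^ n)⁻¹ * ((η * ∫ y, |f y|) + 2 * Cφ * τ) := by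
    rw [← integral_sub hgi hg0i]
    calc |∫ y, (g y - g0 y)| ≤ ∫ y, |g y - g0 y| := by
          simpa [Real.norm_eq_abs] using norm_integral_le_integral_norm (fun y => g y - g0 y)
    _ ≤ ∫ y, h y := integral_mono (hgi.sub hg0i).abs hhi hptwise
    _ ≤ _ := hinth
  have habs0 : |∫ y, g0 y| = (t ^ n)⁻¹ * (|φ z| * |∫ y, f y|) := by
    rw [hg0int, abs_mul, abs_mul, abs_of_pos htn, mul_assoc]
  have htri := abs_sub_abs_le_abs_sub (∫ y, g0 y) (∫ y, g y)
  rw [abs_sub_comm] at htri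
  have hre : |phiConv n φ f t x| = |∫ y, g y| := rfl
  rw [hre]
  have expand : (t ^ n)⁻¹ * (|φ z| * |∫ y, f y| - (η * ∫ y, |f y|) - 2 * Cφ * τ)
      = (t ^ n)⁻¹ * (|φ z| * |∫ y, f y|)
        - (t ^ n)⁻¹ * ((η * ∫ y, |f y|) + 2 * Cφ * τ) := by ring
  linarith [herr, htri]

private lemma tail_small (hf : Integrable f) {ε : ℝ} (hε : 0 < ε) :
    ∃ R : ℝ, 0 < R ∧ ∫ y in (closedBall (0 : En n) R)ᶜ, |f y| ≤ ε := by
  have hmono : Monotone (fun m : ℕ => closedBall (0 : En n) m) := fun a b hab =>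
    closedBall_subset_closedBall (by exact_mod_cast hab)
  have hU : ⋃ m : ℕ, closedBall (0 : En n) m = univ := iUnion_closedBall_nat 0
  have ht := tendsto_setIntegral_of_monotone (f := fun y => |f y|)
    (fun m : ℕ => measurableSet_closedBall) hmono (by rw [hU]; exact hf.abs.integrableOn)
  rw [hU, setIntegral_univ] at ht
  have hev : ∀ᶠ m : ℕ in Filter.atTop,
      (∫ y, |f y|) - ε < ∫ y in closedBall (0 : En n) m, |f y| :=
    ht.eventually_const_lt (by linarith)
  obtain ⟨m, hm⟩ := hev.exists
  refine ⟨(m : ℝ) + 1, by positivity, ?_⟩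
  have hsub : (closedBall (0 : En n) ((m : ℝ) + 1))ᶜ ⊆ (closedBall (0 : En n) m)ᶜ :=
    compl_subset_compl.2 (closedBall_subset_closedBall (by linarith))
  have h1 : ∫ y in (closedBall (0 : En n) ((m:ℝ)+1))ᶜ, |f y|
      ≤ ∫ y in (closedBall (0 : En n) m)ᶜ, |f y| :=
    setIntegral_mono_set hf.abs.integrableOn
      (Filter.Eventually.of_forall fun y => abs_nonneg _) (HasSubset.Subset.eventuallyLE hsub)
  have h2 : (∫ y in closedBall (0 : En n) m, |f y|)
      + ∫ y in (closedBall (0 : En n) m)ᶜ, |f y| = ∫ y, |f y| :=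
    integral_add_compl measurableSet_closedBall hf.abs
  linarith

private lemma exists_ne_zero_of_integral_one (hn : 1 ≤ n) (hφc : Continuous φ)
    (hφint : (∫ x, φ x) = 1) : ∃ z : En n, z ≠ 0 ∧ φ z ≠ 0 := by
  have h0 : ∃ z₀ : En n, φ z₀ ≠ 0 := by
    by_contra h
    push_neg at h
    have : (∫ x, φ x) = 0 := by simp [funext h]
    rw [this] at hφint; norm_num at hφint
  obtain ⟨z₀, hz₀⟩ := h0
  by_cases hz : z₀ ≠ 0
  · exact ⟨z₀, hz, hz₀⟩
  push_neg at hz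
  obtain ⟨ε, hε0, hε⟩ := Metric.continuousAt_iff.1 (hφc.continuousAt (x := z₀)) |φ z₀|
    (abs_pos.2 hz₀)
  set w : En n := EuclideanSpace.single (⟨0, hn⟩ : Fin n) (ε/2) with hw
  have hwnorm : ‖w‖ = ε/2 := by
    rw [hw, EuclideanSpace.norm_single, Real.norm_eq_abs, abs_of_pos (by linarith)]
  have hw0 : w ≠ 0 := by
    intro h
    rw [h] at hwnorm
    simp at hwnorm; linarith
  refine ⟨w, hw0, fun hcon => ?_⟩
  have : dist w z₀ < ε := by
    rw [hz, dist_zero_right, hwnorm]; linarith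
  have := hε this
  rw [Real.dist_eq, hcon, zero_sub, abs_neg] at this
  exact lt_irrefl _ this

end Aux

set_option maxHeartbeats 1600000 in
/-- An integrable function whose maximal function lies in `L_log(ℝ^n)` has
integral zero. -/
theorem integral_zero_of_Hlog (n : ℕ) (hn : 1 ≤ n) (f φ : En n → ℝ)
    (hf : Integrable f) (hφ : IsTestFun n φ)
    (hmax : ∫⁻ x, ENNReal.ofReal (Psi n x (Mphi n φ f x)) < ⊤) :
    (∫ x, f x) = 0 := by
  by_contra hc0
  obtain ⟨hφsm, hφsupp, hφint⟩ := hφ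
  have hφc : Continuous φ := hφsm.continuous
  obtain ⟨Cφ₀, hCφ₀⟩ := (HasCompactSupport.intro (isCompact_closedBall (0:En n) 1)
    hφsupp).exists_bound_of_continuous hφc
  set Cφ : ℝ := max Cφ₀ 1 with hCφdef
  have hCφ : ∀ w, |φ w| ≤ Cφ := fun w =>
    le_trans (by simpa [Real.norm_eq_abs] using hCφ₀ w) (le_max_left _ _)
  have hCφ1 : (1:ℝ) ≤ Cφ := le_max_right _ _
  have hCφpos : (0:ℝ) < Cφ := lt_of_lt_of_le one_pos hCφ1
  obtain ⟨z, hz0, hφz⟩ := exists_ne_zero_of_integral_one hn hφc hφint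
  have hznorm : (0:ℝ) < ‖z‖ := norm_pos_iff.2 hz0
  have hz1 : ‖z‖ ≤ 1 := by
    by_contra h
    push_neg at h
    apply hφz
    apply hφsupp
    simp only [mem_closedBall, dist_zero_right, not_le]
    exact h
  set c := ∫ y, f y with hcdef
  have hc : (0:ℝ) < |c| := abs_pos.2 hc0
  set δφ := |φ z| with hδφdef
  have hδφ : 0 < δφ := abs_pos.2 hφz
  set I := ∫ y, |f y| with hIdef
  have hI0 : 0 ≤ I := integral_nonneg fun y => abs_nonneg _
  set η := δφ * |c| / (4 * (I + 1)) with hηdef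
  have hη : 0 < η := by positivity
  obtain ⟨ρ₀, hρ₀, hρ₀η⟩ := Metric.continuousAt_iff.1 (hφc.continuousAt (x := z)) η hη
  set ρ := min (ρ₀/2) 1 with hρdef
  have hρpos : 0 < ρ := lt_min (by linarith) one_pos
  have hρ1 : ρ ≤ 1 := min_le_right _ _
  have hρη : ∀ w : En n, ‖w - z‖ ≤ ρ → |φ w - φ z| ≤ η := by
    intro w hwz
    have hd : dist w z < ρ₀ := by
      rw [dist_eq_norm]
      calc ‖w - z‖ ≤ ρ := hwz
      _ ≤ ρ₀/2 := min_le_left _ _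
      _ < ρ₀ := by linarith
    have := hρ₀η hd
    rw [Real.dist_eq] at this
    exact this.le
  set τ := δφ * |c| / (8 * Cφ) with hτdef
  have hτ0 : 0 < τ := by positivity
  obtain ⟨R, hR0, hRτ⟩ := tail_small hf hτ0
  set κ := δφ * |c| / 2 with hκdef
  have hκ0 : 0 < κ := by positivity
  have hκle : κ ≤ δφ * |c| - (η * I) - 2 * Cφ * τ := by
    have h1 : η * I ≤ δφ * |c| / 4 := by
      rw [hηdef, div_mul_eq_mul_div, div_le_div_iff₀ (by positivity) (by norm_num)]
      nlinarith
    have h2 : 2 * Cφ * τ = δφ * |c| / 4 := by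
      rw [hτdef]; field_simp; ring
    rw [hκdef]; linarith
  -- choice of K
  obtain ⟨K₁, hK₁⟩ := pow_unbounded_of_one_lt (max (2*R/ρ) κ) (by norm_num : (1:ℝ) < 4)
  set K := K₁ + 1 with hKdef
  have hK4 : max (2*R/ρ) κ < 4 ^ K :=
    lt_of_lt_of_le hK₁ (pow_le_pow_right₀ (by norm_num) (by omega))
  have hRK : R ≤ ρ/2 * 4 ^ K := by
    have h := (le_max_left (2*R/ρ) κ).trans_lt hK4
    rw [div_lt_iff₀ hρpos] at h
    linarith
  have hκK : κ ≤ 4 ^ K := ((le_max_right _ _).trans_lt hK4).le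
  -- geometry
  set u : En n := ‖z‖⁻¹ • z with hudef
  have hu : ‖u‖ = 1 := by
    rw [hudef, norm_smul, Real.norm_eq_abs, abs_of_pos (inv_pos.2 hznorm),
      inv_mul_cancel₀ hznorm.ne']
  set A : ℕ → ℝ := fun j => 4 ^ (K + j) with hAdef
  have hA4 : ∀ j, (4:ℝ) ≤ A j := fun j => by
    simp only [hAdef]
    calc (4:ℝ) = 4^1 := (pow_one 4).symm
    _ ≤ 4 ^ (K + j) := pow_le_pow_right₀ (by norm_num) (by omega)
  have hApos : ∀ j, (0:ℝ) < A j := fun j => lt_of_lt_of_le (by norm_num) (hA4 j)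
  have hA4K : ∀ j, (4:ℝ)^K ≤ A j := fun j => pow_le_pow_right₀ (by norm_num) (by omega)
  set B : ℕ → Set (En n) := fun j => closedBall ((A j) • u) (ρ/2 * A j) with hBdef
  have hBmem : ∀ j, ∀ x : En n, x ∈ B j ↔ ‖x - A j • u‖ ≤ ρ/2 * A j := by
    intro j x
    simp only [hBdef, mem_closedBall, dist_eq_norm]
  set tj : ℕ → ℝ := fun j => A j * ‖z‖⁻¹ with htjdef
  have htjpos : ∀ j, 0 < tj j := fun j => by
    have := hApos j; simp only [htjdef]; positivity
  have hzinv : (1:ℝ) ≤ ‖z‖⁻¹ := by simpa using inv_anti₀ hznorm hz1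
  have hAtj : ∀ j, A j ≤ tj j := fun j => by
    simp only [htjdef]
    exact le_mul_of_one_le_right (hApos j).le hzinv
  have htjn : ∀ j, A j ≤ (tj j)^n := fun j =>
    (hAtj j).trans (le_self_pow₀ (by linarith [hA4 j, hAtj j]) (by omega))
  -- geometric condition
  have hgeom : ∀ j, ∀ x ∈ B j, ∀ y ∈ closedBall (0 : En n) R,
      ‖(tj j)⁻¹ • (x - y) - z‖ ≤ ρ := by
    intro j x hx y hy
    have hAj := hApos j
    have e1 : (tj j) • z = A j • u := by
      simp only [htjdef, hudef, smul_smul]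
    have e2 : (tj j)⁻¹ • (x - y) - z = (tj j)⁻¹ • (x - y - (tj j) • z) := by
      rw [smul_sub (tj j)⁻¹ (x - y) ((tj j) • z), smul_smul,
        inv_mul_cancel₀ (htjpos j).ne', one_smul]
    have hxA : ‖x - A j • u‖ ≤ ρ/2 * A j := (hBmem j x).1 hx
    have hyR : ‖y‖ ≤ R := by simpa [mem_closedBall, dist_zero_right] using hy
    have hRj : R ≤ ρ/2 * A j := by
      calc R ≤ ρ/2 * 4^K := hRK
      _ ≤ ρ/2 * A j := by
        apply mul_le_mul_of_nonneg_left (hA4K j) (by linarith)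
    have hnorm1 : ‖x - y - (tj j) • z‖ ≤ ρ * A j := by
      rw [e1]
      calc ‖x - y - A j • u‖ = ‖(x - A j • u) - y‖ := by rw [sub_right_comm]
      _ ≤ ‖x - A j • u‖ + ‖y‖ := norm_sub_le _ _
      _ ≤ ρ/2 * A j + R := add_le_add hxA hyR
      _ ≤ ρ/2 * A j + ρ/2 * A j := by linarith
      _ = ρ * A j := by ring
    rw [e2, norm_smul, Real.norm_eq_abs, abs_of_pos (inv_pos.2 (htjpos j))]
    have htjinv : (tj j)⁻¹ ≤ (A j)⁻¹ := inv_anti₀ hAj (hAtj j)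
    calc (tj j)⁻¹ * ‖x - y - (tj j) • z‖ ≤ (A j)⁻¹ * (ρ * A j) := by
          apply mul_le_mul htjinv hnorm1 (norm_nonneg _) (by positivity)
    _ = ρ := by field_simp
  -- the per-point lower bound via the maximal function
  have hMphi : ∀ j, ∀ x ∈ B j,
      BddAbove (Set.range fun t : {t : ℝ // 0 < t} => |phiConv n φ f t.1 x|) →
      κ * ((tj j)^n)⁻¹ ≤ Mphi n φ f x := by
    intro j x hx hbdd
    have hb := key_estimate hf hφc hCφ hη.le hρη hRτ (htjpos j) (hgeom j x hx)
    have hstep : κ * ((tj j)^n)⁻¹ ≤ |phiConv n φ f (tj j) x| := by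
      refine le_trans ?_ hb
      rw [mul_comm]
      apply mul_le_mul_of_nonneg_left _ (by positivity)
      · exact hκle
    exact hstep.trans (le_ciSup hbdd ⟨tj j, htjpos j⟩)
  -- numeric auxiliary facts
  have he2 : (2:ℝ) ≤ Real.exp 1 := by
    have := Real.exp_one_gt_d9; linarith
  have hlog4 : Real.log 4 ≤ 2 := by
    calc Real.log 4 ≤ Real.log (Real.exp 1 * Real.exp 1) :=
          Real.log_le_log (by norm_num) (by nlinarith)
    _ = 2 := by
        rw [Real.log_mul (Real.exp_pos 1).ne' (Real.exp_pos 1).ne', Real.log_exp]; norm_num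
  -- per-ball constants
  set P := κ * (ρ/2)^n * ‖z‖^n with hPdef
  have hP0 : 0 < P := by positivity
  set Vb := volume (ball (0 : En n) 1) with hVbdef
  have hVb0 : Vb ≠ 0 := (measure_ball_pos volume _ one_pos).ne'
  have hVbtop : Vb ≠ ⊤ := measure_ball_lt_top.ne
  -- lower bound for the lintegral on each ball
  have hball_low : ∀ j : ℕ,
      ENNReal.ofReal (P / (2*((K:ℝ)+2)*((j:ℝ)+1))) * Vb
        ≤ ∫⁻ x in B j, ENNReal.ofReal (Psi n x (Mphi n φ f x)) := by
    intro j
    have hAj := hApos j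
    set mj := κ * ((tj j)^n)⁻¹ with hmjdef
    have hmj0 : 0 ≤ mj := by positivity
    have hmj1 : mj ≤ 1 := by
      have hκA : κ ≤ A j := hκK.trans (hA4K j)
      have hinv : ((tj j)^n)⁻¹ ≤ (A j)⁻¹ := inv_anti₀ hAj (htjn j)
      calc mj ≤ A j * (A j)⁻¹ := mul_le_mul hκA hinv (by positivity) hAj.le
      _ = 1 := mul_inv_cancel₀ hAj.ne'
    -- pointwise bound on B j
    have hpt : ∀ x ∈ B j,
        BddAbove (Set.range fun t : {t : ℝ // 0 < t} => |phiConv n φ f t.1 x|) →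
        mj / (2*((K:ℝ)+2)*((j:ℝ)+1)) ≤ Psi n x (Mphi n φ f x) := by
      intro x hx hbdd
      have hxn : ‖x‖ ≤ 2 * A j := by
        have hxA : ‖x - A j • u‖ ≤ ρ/2 * A j := (hBmem j x).1 hx
        have hcn : ‖(A j) • u‖ = A j := by
          rw [norm_smul, Real.norm_eq_abs, hu, mul_one, abs_of_pos hAj]
        have htri : ‖x‖ - ‖(A j) • u‖ ≤ ‖x - A j • u‖ := norm_sub_norm_le _ _
        rw [hcn] at htri
        nlinarith
      have hD1 : Real.log (Real.exp 1 + mj) ≤ 2 := by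
        calc Real.log (Real.exp 1 + mj) ≤ Real.log (Real.exp 1 * Real.exp 1) :=
              Real.log_le_log (by positivity) (by nlinarith)
        _ = 2 := by
            rw [Real.log_mul (Real.exp_pos 1).ne' (Real.exp_pos 1).ne', Real.log_exp]; norm_num
      have hD2 : Real.log (Real.exp 1 + ‖x‖) ≤ 2 * ((K:ℝ) + (j:ℝ) + 1) := by
        have hb1 : Real.exp 1 + ‖x‖ ≤ (4:ℝ)^(K+j+1) := by
          have : (4:ℝ)^(K+j+1) = 4 * A j := by
            rw [hAdef, pow_succ]; ring
          rw [this]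
          have : Real.exp 1 ≤ 2 * A j := by nlinarith [hA4 j, Real.exp_one_lt_d9]
          linarith
        calc Real.log (Real.exp 1 + ‖x‖) ≤ Real.log ((4:ℝ)^(K+j+1)) :=
              Real.log_le_log (by positivity) hb1
        _ = ((K+j+1 : ℕ) : ℝ) * Real.log 4 := by rw [Real.log_pow]
        _ ≤ ((K+j+1 : ℕ) : ℝ) * 2 := by
              apply mul_le_mul_of_nonneg_left hlog4 (by positivity)
        _ = 2 * ((K:ℝ) + (j:ℝ) + 1) := by push_cast; ring
      have hdenpos : 0 < Real.log (Real.exp 1 + mj) + Real.log (Real.exp 1 + ‖x‖) := by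
        have := one_le_log_exp_add hmj0
        have := one_le_log_exp_add (norm_nonneg x)
        linarith
      have hden : Real.log (Real.exp 1 + mj) + Real.log (Real.exp 1 + ‖x‖)
          ≤ 2*((K:ℝ)+2)*((j:ℝ)+1) := by
        have hK0 : (0:ℝ) ≤ (K:ℝ) := Nat.cast_nonneg _
        have hj0 : (0:ℝ) ≤ (j:ℝ) := Nat.cast_nonneg _
        nlinarith
      calc mj / (2*((K:ℝ)+2)*((j:ℝ)+1))
          ≤ mj / (Real.log (Real.exp 1 + mj) + Real.log (Real.exp 1 + ‖x‖)) := by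
            apply div_le_div_of_nonneg_left hmj0 hdenpos hden
      _ = Psi n x mj := rfl
      _ ≤ Psi n x (Mphi n φ f x) := psi_mono n x hmj0 (hMphi j x hx hbdd)
    -- volume identity
    have hrj : (0:ℝ) ≤ ρ/2 * A j := by positivity
    have hvol : volume (B j) = ENNReal.ofReal ((ρ/2 * A j)^n) * Vb := by
      simp only [hBdef]
      rw [Measure.addHaar_closedBall volume _ hrj, finrank_euclideanSpace_fin]
    have hconst : P / (2*((K:ℝ)+2)*((j:ℝ)+1))
        = (mj / (2*((K:ℝ)+2)*((j:ℝ)+1))) * ((ρ/2 * A j)^n) := by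
      have hzn : ‖z‖ ^ n ≠ 0 := by positivity
      have hAn : (A j) ^ n ≠ 0 := by positivity
      have htjn' : (tj j)^n = (A j)^n * (‖z‖^n)⁻¹ := by
        simp only [htjdef]
        rw [mul_pow, inv_pow]
      rw [hPdef, hmjdef, htjn']
      rw [mul_pow]
      field_simp
    calc ENNReal.ofReal (P / (2*((K:ℝ)+2)*((j:ℝ)+1))) * Vb
        = ENNReal.ofReal (mj / (2*((K:ℝ)+2)*((j:ℝ)+1))) * volume (B j) := by
          rw [hconst, hvol, ENNReal.ofReal_mul (by positivity), mul_assoc]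
    _ = ∫⁻ _ in B j, ENNReal.ofReal (mj / (2*((K:ℝ)+2)*((j:ℝ)+1))) :=
          (setLIntegral_const _ _).symm
    _ ≤ ∫⁻ x in B j, ENNReal.ofReal (Psi n x (Mphi n φ f x)) := by
          apply lintegral_mono_ae
          filter_upwards [ae_restrict_of_ae (ae_bddAbove hf hφc hφsupp hCφ),
            ae_restrict_mem measurableSet_closedBall] with x hbdd hxB
          exact ENNReal.ofReal_le_ofReal (hpt x hxB hbdd)
  -- disjointness
  have hdisj : ∀ i j : ℕ, i < j → Disjoint (B i) (B j) := by
    intro i j hij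
    have h4 : 4 * A i ≤ A j := by
      rw [hAdef]
      calc 4 * (4:ℝ) ^ (K + i) = 4 ^ (K + i + 1) := by rw [pow_succ]; ring
      _ ≤ 4 ^ (K + j) := pow_le_pow_right₀ (by norm_num) (by omega)
    have hAi := hApos i
    have hAj := hApos j
    simp only [hBdef]
    apply closedBall_disjoint_closedBall
    have hd : dist ((A i) • u) ((A j) • u) = A j - A i := by
      rw [dist_eq_norm, ← sub_smul, norm_smul, Real.norm_eq_abs, hu, mul_one,
        abs_of_neg (by nlinarith : A i - A j < 0)]
      ring
    rw [hd]
    nlinarith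
  -- summation
  have hpart : ∀ m : ℕ,
      ∑ j ∈ Finset.range m, ENNReal.ofReal (P / (2*((K:ℝ)+2)*((j:ℝ)+1))) * Vb
        ≤ ∫⁻ x, ENNReal.ofReal (Psi n x (Mphi n φ f x)) := by
    intro m
    have hpd : Set.PairwiseDisjoint ↑(Finset.range m) B := by
      intro a _ b _ hab
      rcases lt_or_gt_of_ne hab with h | h
      · exact hdisj a b h
      · exact (hdisj b a h).symm
    calc ∑ j ∈ Finset.range m, ENNReal.ofReal (P / (2*((K:ℝ)+2)*((j:ℝ)+1))) * Vb
        ≤ ∑ j ∈ Finset.range m, ∫⁻ x in B j, ENNReal.ofReal (Psi n x (Mphi n φ f x)) :=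
          Finset.sum_le_sum fun j _ => hball_low j
    _ = ∫⁻ x in ⋃ j ∈ Finset.range m, B j, ENNReal.ofReal (Psi n x (Mphi n φ f x)) :=
          (lintegral_biUnion_finset hpd (fun j _ => measurableSet_closedBall) _).symm
    _ ≤ ∫⁻ x, ENNReal.ofReal (Psi n x (Mphi n φ f x)) := setLIntegral_le_lintegral _ _
  set Q := P / (2*((K:ℝ)+2)) with hQdef
  have hQ0 : 0 < Q := by positivity
  set T := ∫⁻ x, ENNReal.ofReal (Psi n x (Mphi n φ f x)) with hTdef
  have hTVb : T / Vb ≠ ⊤ := (ENNReal.div_lt_top hmax.ne hVb0).ne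
  have hbound : ∀ m : ℕ, Q * (∑ j ∈ Finset.range m, (1 / (j + 1) : ℝ)) ≤ (T / Vb).toReal := by
    intro m
    have hterm : ∀ j : ℕ, P / (2*((K:ℝ)+2)*((j:ℝ)+1)) = Q * (1 / (j + 1) : ℝ) := by
      intro j
      rw [hQdef]
      have : ((j:ℝ)+1) ≠ 0 := by positivity
      field_simp
    have h1 : ENNReal.ofReal (Q * ∑ j ∈ Finset.range m, (1 / (j + 1) : ℝ)) * Vb ≤ T := by
      rw [Finset.mul_sum, ENNReal.ofReal_sum_of_nonneg (fun j _ => mul_nonneg hQ0.le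
        (by positivity)), Finset.sum_mul]
      calc ∑ j ∈ Finset.range m, ENNReal.ofReal (Q * (1 / (j + 1) : ℝ)) * Vb
          = ∑ j ∈ Finset.range m, ENNReal.ofReal (P / (2*((K:ℝ)+2)*((j:ℝ)+1))) * Vb := by
            refine Finset.sum_congr rfl fun j _ => by rw [hterm j]
      _ ≤ T := hpart m
    have h2 : ENNReal.ofReal (Q * ∑ j ∈ Finset.range m, (1 / (j + 1) : ℝ)) ≤ T / Vb :=
      (ENNReal.le_div_iff_mul_le (Or.inl hVb0) (Or.inl hVbtop)).2 h1
    exact (ENNReal.ofReal_le_iff_le_toReal hTVb).1 h2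
  obtain ⟨m, hm⟩ := (Filter.tendsto_atTop.1 Real.tendsto_sum_range_one_div_nat_succ_atTop
    (((T / Vb).toReal + 1) / Q)).exists
  have h3 : (T / Vb).toReal + 1 ≤ (∑ j ∈ Finset.range m, (1 / (j + 1) : ℝ)) * Q :=
    (div_le_iff₀ hQ0).1 hm
  have h4 := hbound m
  nlinarith
end
end
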